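/- Let 0 ≤ γ2 ≤ γ1 ≤ π/2 with γ1 + γ2 ≤ π/2, and define x3^(3,4)(γ1,γ2) = [−sin γ1 (±sin γ1 + (cos γ1 cos γ2 + sin²γ1) sin γ2)] / [1 + cos γ1 (cos γ2 − sin γ2 (cos γ1 sin γ2 + sin²γ1 tan γ2))], where the + sign gives x3^(3) and the − sign gives x3^(4). Then −1 ≤ x3^(3) ≤ 0 ≤ x3^(4) ≤ 1. -/

import Mathlib

/-!
Write `P = cos γ1 cos γ2 + sin² γ1`. Clearing `tan γ2` gives
`cos γ2 · d = cos γ2 + cos γ1 (cos² γ2 - P sin² γ2)`, and `P sin² γ2 ≤ 2 cos² γ2 sin² γ2 ≤ cos² γ2`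
because `γ2 ≤ π/4`; hence `d ≥ 1`. Then `x3^(4) ≤ 1` is just `sin² γ1 ≤ 1`, while `x3^(4) ≥ 0` is
`P sin γ2 ≤ sin γ1`, which reduces to `sin γ1 - sin γ2 ≤ sin (γ1 - γ2)`. Finally `x3^(3) ≥ -1`
follows from `P sin γ2 sin (γ1 + γ2) ≤ P sin γ2 ≤ P cos γ1 ≤ cos γ1 cos γ2 (cos γ1 + cos γ2)`.
-/

open Real

lemma Real.sin_sub_sin_le_sin_sub {a b : ℝ} (hb : 0 ≤ b) (hba : b ≤ a) (hab : a + b ≤ 2 * π) :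
    sin a - sin b ≤ sin (a - b) := by
  have hsin : 0 ≤ sin ((a - b) / 2) := sin_nonneg_of_nonneg_of_le_pi (by linarith) (by linarith)
  have hcos : cos ((a + b) / 2) ≤ cos ((a - b) / 2) :=
    cos_le_cos_of_nonneg_of_le_pi (by linarith) (by linarith) (by linarith)
  calc sin a - sin b = 2 * sin ((a - b) / 2) * cos ((a + b) / 2) := sin_sub_sin a b
    _ ≤ 2 * sin ((a - b) / 2) * cos ((a - b) / 2) := by gcongr
    _ = sin (a - b) := by rw [← sin_two_mul, mul_div_cancel₀ _ two_ne_zero]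

lemma Real.sin_le_cos_of_add_le_pi_div_two {a b : ℝ} (ha : -(π / 2) ≤ a) (hb : 0 ≤ b)
    (hab : a + b ≤ π / 2) : sin a ≤ cos b := by
  rw [← sin_pi_div_two_sub]
  exact sin_le_sin_of_le_of_le_pi_div_two ha (by linarith) (by linarith)

section Angles

variable {a b : ℝ}

lemma mul_sin_le_sin (hb : 0 ≤ b) (hba : b ≤ a) (hab : a + b ≤ π / 2) :
    (cos a * cos b + sin a ^ 2) * sin b ≤ sin a := by
  have hsb : 0 ≤ sin b := sin_nonneg_of_nonneg_of_le_pi hb (by linarith [pi_pos])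
  have hsa : 0 ≤ sin a := sin_nonneg_of_nonneg_of_le_pi (by linarith) (by linarith [pi_pos])
  have hsba : sin b ≤ sin a := sin_le_sin_of_le_of_le_pi_div_two (by linarith) (by linarith) hba
  have hsacb : sin a ≤ cos b := sin_le_cos_of_add_le_pi_div_two (by linarith) hb hab
  have hsub : sin a - sin b ≤ sin (a - b) :=
    sin_sub_sin_le_sin_sub hb hba (by linarith [pi_pos])
  have hcb : 0 ≤ cos b := cos_nonneg_of_mem_Icc ⟨by linarith [pi_pos], by linarith⟩
  have hsasb : sin a * sin b ≤ cos b := by nlinarith [sin_le_one b]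
  calc (cos a * cos b + sin a ^ 2) * sin b
      = sin a - (cos b * sin (a - b) - sin a * sin b * (sin a - sin b)) := by
        rw [sin_sub]; linear_combination sin a * sin_sq_add_cos_sq b
    _ ≤ sin a - (cos b * (sin a - sin b) - sin a * sin b * (sin a - sin b)) := by gcongr
    _ = sin a - (cos b - sin a * sin b) * (sin a - sin b) := by ring
    _ ≤ sin a := sub_le_self _ (mul_nonneg (sub_nonneg.2 hsasb) (sub_nonneg.2 hsba))

lemma mul_sin_sq_le_cos_sq (hb : 0 ≤ b) (hba : b ≤ a) (hab : a + b ≤ π / 2) :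
    (cos a * cos b + sin a ^ 2) * sin b ^ 2 ≤ cos b ^ 2 := by
  have hca : 0 ≤ cos a := cos_nonneg_of_mem_Icc ⟨by linarith [pi_pos], by linarith⟩
  have hcb : 0 ≤ cos b := cos_nonneg_of_mem_Icc ⟨by linarith [pi_pos], by linarith⟩
  have hcab : cos a ≤ cos b := cos_le_cos_of_nonneg_of_le_pi hb (by linarith [pi_pos]) hba
  have hsa : 0 ≤ sin a := sin_nonneg_of_nonneg_of_le_pi (by linarith) (by linarith [pi_pos])
  have hsacb : sin a ≤ cos b := sin_le_cos_of_add_le_pi_div_two (by linarith) hb hab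
  have hsbcb : sin b ≤ cos b := sin_le_cos_of_add_le_pi_div_two (by linarith) hb (by linarith)
  have hsb : 0 ≤ sin b := sin_nonneg_of_nonneg_of_le_pi hb (by linarith [pi_pos])
  calc (cos a * cos b + sin a ^ 2) * sin b ^ 2
      ≤ (cos b * cos b + cos b ^ 2) * sin b ^ 2 := by gcongr
    _ ≤ cos b ^ 2 * (sin b ^ 2 + cos b ^ 2) := by nlinarith [mul_le_mul hsbcb hsbcb hsb hcb]
    _ = cos b ^ 2 := by rw [sin_sq_add_cos_sq, mul_one]

lemma cos_mul_denominator (hb : cos b ≠ 0) :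
    cos b * (1 + cos a * (cos b - sin b * (cos a * sin b + sin a ^ 2 * tan b))) =
      cos b + cos a * (cos b ^ 2 - (cos a * cos b + sin a ^ 2) * sin b ^ 2) := by
  rw [tan_eq_sin_div_cos]
  field_simp

lemma one_le_denominator (hb : 0 ≤ b) (hba : b ≤ a) (hab : a + b ≤ π / 2) :
    1 ≤ 1 + cos a * (cos b - sin b * (cos a * sin b + sin a ^ 2 * tan b)) := by
  have hcb : 0 < cos b := cos_pos_of_mem_Ioo ⟨by linarith [pi_pos], by linarith [pi_pos]⟩
  have hca : 0 ≤ cos a := cos_nonneg_of_mem_Icc ⟨by linarith [pi_pos], by linarith⟩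
  refine le_of_mul_le_mul_left ?_ hcb
  rw [cos_mul_denominator hcb.ne', mul_one, le_add_iff_nonneg_right]
  exact mul_nonneg hca (sub_nonneg.2 (mul_sin_sq_le_cos_sq hb hba hab))

lemma sin_mul_le_denominator (hb : 0 ≤ b) (hba : b ≤ a) (hab : a + b ≤ π / 2) :
    sin a * (sin a + (cos a * cos b + sin a ^ 2) * sin b) ≤
      1 + cos a * (cos b - sin b * (cos a * sin b + sin a ^ 2 * tan b)) := by
  have hcb : 0 < cos b := cos_pos_of_mem_Ioo ⟨by linarith [pi_pos], by linarith [pi_pos]⟩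
  have hca : 0 ≤ cos a := cos_nonneg_of_mem_Icc ⟨by linarith [pi_pos], by linarith⟩
  have hsa : 0 ≤ sin a := sin_nonneg_of_nonneg_of_le_pi (by linarith) (by linarith [pi_pos])
  have hsb : 0 ≤ sin b := sin_nonneg_of_nonneg_of_le_pi hb (by linarith [pi_pos])
  have hsacb : sin a ≤ cos b := sin_le_cos_of_add_le_pi_div_two (by linarith) hb hab
  have hsbca : sin b ≤ cos a :=
    sin_le_cos_of_add_le_pi_div_two (by linarith) (by linarith) (by linarith)
  have hsum : sin a * cos b + cos a * sin b ≤ 1 := by simpa [sin_add] using sin_le_one (a + b)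
  set P := cos a * cos b + sin a ^ 2
  have hP : 0 ≤ P := by positivity
  have key : P * sin b * (sin a * cos b + cos a * sin b) ≤ cos a * cos b * (cos a + cos b) :=
    calc P * sin b * (sin a * cos b + cos a * sin b)
        ≤ P * sin b := mul_le_of_le_one_right (by positivity) hsum
      _ ≤ P * cos a := by gcongr
      _ = cos a ^ 2 * cos b + cos a * sin a ^ 2 := by ring
      _ ≤ cos a ^ 2 * cos b + cos a * cos b ^ 2 := by gcongr
      _ = cos a * cos b * (cos a + cos b) := by ring
  refine le_of_mul_le_mul_left ?_ hcb
  rw [cos_mul_denominator hcb.ne']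
  nlinarith [sin_sq_add_cos_sq a]

end Angles

theorem stmt3 (γ1 γ2 : ℝ)
    (h1 : 0 ≤ γ2) (h2 : γ2 ≤ γ1) (h3 : γ1 ≤ π/2) (h4 : γ1 + γ2 ≤ π/2) :
    let d := 1 + Real.cos γ1 * (Real.cos γ2 -
      Real.sin γ2 * (Real.cos γ1 * Real.sin γ2 + (Real.sin γ1)^2 * Real.tan γ2))
    let x33 := (-Real.sin γ1 * (Real.sin γ1 +
      (Real.cos γ1 * Real.cos γ2 + (Real.sin γ1)^2) * Real.sin γ2)) / d
    let x34 := (-Real.sin γ1 * (-Real.sin γ1 +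
      (Real.cos γ1 * Real.cos γ2 + (Real.sin γ1)^2) * Real.sin γ2)) / d
    ((-1 : ℝ) ≤ x33 ∧ x33 ≤ 0 ∧ 0 ≤ x34 ∧ x34 ≤ 1) := by
  intro d x33 x34
  have hd : 1 ≤ d := one_le_denominator h1 h2 h4
  have hd0 : 0 < d := zero_lt_one.trans_le hd
  have hsa : 0 ≤ sin γ1 := sin_nonneg_of_nonneg_of_le_pi (by linarith) (by linarith [pi_pos])
  have hsb : 0 ≤ sin γ2 := sin_nonneg_of_nonneg_of_le_pi h1 (by linarith [pi_pos])
  have hca : 0 ≤ cos γ1 := cos_nonneg_of_mem_Icc ⟨by linarith [pi_pos], h3⟩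
  have hcb : 0 ≤ cos γ2 := cos_nonneg_of_mem_Icc ⟨by linarith [pi_pos], by linarith⟩
  have hPs : 0 ≤ (cos γ1 * cos γ2 + sin γ1 ^ 2) * sin γ2 := by positivity
  refine ⟨?_, ?_, ?_, ?_⟩
  · rw [le_div_iff₀ hd0]
    linarith [sin_mul_le_denominator h1 h2 h4]
  · exact div_nonpos_of_nonpos_of_nonneg (by nlinarith) hd0.le
  · exact div_nonneg (by nlinarith [mul_sin_le_sin h1 h2 h4]) hd0.le
  · rw [div_le_one hd0]
    nlinarith [sin_le_one γ1]
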